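/- Suppose the productions of a nonterminal C of the form C → αX are each split into two productions C → A_C X and A_C → α where A_C is a fresh nonterminal. Then the transformed grammar generates the same language: for all w ∈ T*, S ⇒*_G w iff S ⇒*_{G'} w. -/

import Mathlib

open scoped Classical

/-- Embed symbols over nonterminals `N` into symbols over `N ⊕ Unit`. -/
def embSymbol {T N : Type} : Symbol T N → Symbol T (N ⊕ Unit)
  | .terminal t => .terminal t
  | .nonterminal n => .nonterminal (Sum.inl n)

/-- Embed a rule over nonterminals `N` into a rule over `N ⊕ Unit`. -/
def embRule {T N : Type} (r : ContextFreeRule T N) : ContextFreeRule T (N ⊕ Unit) :=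
  ⟨Sum.inl r.input, r.output.map embSymbol⟩

/-- The grammar obtained from `g` by splitting the production `C → αX` into the two
productions `C → A X` and `A → α`, where `A = Sum.inr ()` is a fresh nonterminal. -/
noncomputable def splitGrammar {T : Type} (g : ContextFreeGrammar T)
    (C : g.NT) (α : List (Symbol T g.NT)) (X : Symbol T g.NT) :
    ContextFreeGrammar T where
  NT := g.NT ⊕ Unit
  initial := Sum.inl g.initial
  rules :=
    (g.rules.erase ⟨C, α ++ [X]⟩).image embRule ∪
      { ⟨Sum.inl C, [Symbol.nonterminal (Sum.inr ()), embSymbol X]⟩,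
        ⟨Sum.inr (), α.map embSymbol⟩ }

/-! Mapping every symbol `s` to `[embSymbol s]` sends each derivation of `G` to one of `G'`,
a use of `C → αX` being simulated by `C → A X` followed by `A → α`. Conversely, substituting
`α` for the fresh `A` sends each derivation of `G'` to one of `G`: the rule `C → A X` becomes
`C → αX` and the rule `A → α` becomes a trivial step. Both substitutions fix terminal words
and the start symbol, so each language contains the other. -/

namespace ContextFreeGrammar

variable {T : Type}

lemma Produces.input_output {g : ContextFreeGrammar T} {r : ContextFreeRule T g.NT}
    (hr : r ∈ g.rules) : g.Produces [.nonterminal r.input] r.output :=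
  ⟨r, hr, ContextFreeRule.Rewrites.input_output⟩

section Substitution

variable {g g' : ContextFreeGrammar T} {φ : Symbol T g.NT → List (Symbol T g'.NT)}

theorem Derives.flatMap
    (hφ : ∀ r ∈ g.rules, g'.Derives (φ (.nonterminal r.input)) (r.output.flatMap φ))
    {u v : List (Symbol T g.NT)} (huv : g.Derives u v) :
    g'.Derives (u.flatMap φ) (v.flatMap φ) := by
  refine Relation.ReflTransGen.lift' (List.flatMap φ) ?_ _ _ huv
  rintro _ _ ⟨r, hr, hrw⟩
  obtain ⟨p, q, rfl, rfl⟩ := hrw.exists_parts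
  simpa only [Function.onFun, List.flatMap_append, List.flatMap_singleton,
    List.append_assoc] using ((hφ r hr).append_right _).append_left _

theorem language_le_of_flatMap
    (hφ : ∀ r ∈ g.rules, g'.Derives (φ (.nonterminal r.input)) (r.output.flatMap φ))
    (hterminal : ∀ t, φ (.terminal t) = [.terminal t])
    (hinitial : φ (.nonterminal g.initial) = [.nonterminal g'.initial]) :
    g.language ≤ g'.language := by
  intro w hw
  have hword : (w.map Symbol.terminal).flatMap φ = w.map Symbol.terminal := by
    simp [List.flatMap_map, hterminal, ← List.map_eq_flatMap]
  refine (mem_language_iff g' w).2 ?_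
  simpa [hinitial, hword] using ((mem_language_iff g w).1 hw).flatMap hφ

end Substitution

end ContextFreeGrammar

section Split

variable {T N : Type}

def projSymbol (α : List (Symbol T N)) : Symbol T (N ⊕ Unit) → List (Symbol T N)
  | .terminal t => [.terminal t]
  | .nonterminal (Sum.inl n) => [.nonterminal n]
  | .nonterminal (Sum.inr _) => α

@[simp]
lemma projSymbol_embSymbol (α : List (Symbol T N)) (s : Symbol T N) :
    projSymbol α (embSymbol s) = [s] := by
  cases s <;> rfl

@[simp]
lemma flatMap_projSymbol_map_embSymbol (α l : List (Symbol T N)) :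
    (l.map embSymbol).flatMap (projSymbol α) = l := by
  simp [List.flatMap_map]

end Split

section SplitGrammar

open ContextFreeGrammar

variable {T : Type} {g : ContextFreeGrammar T} {C : g.NT} {α : List (Symbol T g.NT)}
  {X : Symbol T g.NT}

lemma mem_splitGrammar_rules {r : ContextFreeRule T (g.NT ⊕ Unit)} :
    r ∈ (splitGrammar g C α X).rules ↔
      (∃ r₀ ∈ g.rules.erase ⟨C, α ++ [X]⟩, embRule r₀ = r) ∨
      r = ⟨Sum.inl C, [.nonterminal (Sum.inr ()), embSymbol X]⟩ ∨
      r = ⟨Sum.inr (), α.map embSymbol⟩ := by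
  change r ∈ (_ ∪ _ : Finset (ContextFreeRule T (g.NT ⊕ Unit))) ↔ _
  simp only [Finset.mem_union, Finset.mem_image, Finset.mem_insert, Finset.mem_singleton]

lemma splitGrammar_derives_of_mem {r : ContextFreeRule T g.NT} (hr : r ∈ g.rules) :
    (splitGrammar g C α X).Derives [embSymbol (.nonterminal r.input)]
      (r.output.map embSymbol) := by
  by_cases hrC : r = ⟨C, α ++ [X]⟩
  · subst hrC
    have hsplit : (splitGrammar g C α X).Produces [embSymbol (.nonterminal C)]
        [.nonterminal (Sum.inr ()), embSymbol X] :=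
      Produces.input_output (mem_splitGrammar_rules.2 (Or.inr (Or.inl rfl)))
    have hfresh : (splitGrammar g C α X).Produces [.nonterminal (Sum.inr ()), embSymbol X]
        ((α ++ [X]).map embSymbol) := by
      convert (Produces.input_output (mem_splitGrammar_rules.2 (Or.inr (Or.inr rfl)))).append_right
        [embSymbol X] using 1
      exacts [rfl, List.map_append]
    exact hsplit.trans_derives hfresh.single
  · exact (Produces.input_output <| mem_splitGrammar_rules.2 <|
      Or.inl ⟨r, Finset.mem_erase.2 ⟨hrC, hr⟩, rfl⟩).single

lemma derives_projSymbol_of_mem_splitGrammar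
    (hmem : (⟨C, α ++ [X]⟩ : ContextFreeRule T g.NT) ∈ g.rules)
    {r : ContextFreeRule T (g.NT ⊕ Unit)} (hr : r ∈ (splitGrammar g C α X).rules) :
    g.Derives (projSymbol α (.nonterminal r.input)) (r.output.flatMap (projSymbol α)) := by
  rcases mem_splitGrammar_rules.1 hr with ⟨r₀, hr₀, rfl⟩ | rfl | rfl
  · simpa [embRule, projSymbol] using
      (Produces.input_output (Finset.mem_of_mem_erase hr₀)).single
  · simp only [List.flatMap_cons, List.flatMap_nil, projSymbol_embSymbol, List.append_nil]
    exact (Produces.input_output hmem).single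
  · simpa [projSymbol] using Derives.refl α

end SplitGrammar

/-- Splitting a production `C → αX` into `C → A X`, `A → α` (with `A` fresh) preserves
the generated language. -/
theorem splitGrammar_language {T : Type} (g : ContextFreeGrammar T)
    (C : g.NT) (α : List (Symbol T g.NT)) (X : Symbol T g.NT)
    (hmem : (⟨C, α ++ [X]⟩ : ContextFreeRule T g.NT) ∈ g.rules) :
    g.language = (splitGrammar g C α X).language := by
  apply le_antisymm
  · refine ContextFreeGrammar.language_le_of_flatMap (φ := fun s => [embSymbol s])
      (fun r hr => ?_) (fun _ => rfl) rfl
    convert splitGrammar_derives_of_mem hr using 1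
    exact List.map_eq_flatMap.symm
  · exact ContextFreeGrammar.language_le_of_flatMap
      (fun _ hr => derives_projSymbol_of_mem_splitGrammar hmem hr) (fun _ => rfl) rfl
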